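/- arXiv:1906.00304 — 6 statements merged into one kernel-verified Lean document; each statement's English description precedes it below -/
import Mathlib

section
/- Let α, β, γ, Γ ∈ ℝ, T > 0, and let u : [0,T) × ℝ → ℝ be smooth and satisfy mₜ + (u+Γ)mₓ + 2uₓm = ∂ₓh(u) on [0,T) × ℝ, where m = u − uₓₓ. Let q : [0,T) × ℝ → ℝ be smooth with q(0,x) = x and ∂ₜq(t,x) = u(t, q(t,x)) + Γ. Then for all (t,x) ∈ [0,T) × ℝ: m(t, q(t,x))·(∂ₓq(t,x))² = m(0,x) + ∫₀ᵗ (∂ₓq(s,x))² · h'(u(s, q(s,x)))·(∂ₓu)(s, q(s,x)) ds. -/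
/-- spatial partial derivative of a function of `(t,x)` -/
noncomputable def Dx (f : ℝ → ℝ → ℝ) : ℝ → ℝ → ℝ := fun t x => deriv (f t) x

/-- time partial derivative of a function of `(t,x)` -/
noncomputable def Dt (f : ℝ → ℝ → ℝ) : ℝ → ℝ → ℝ := fun t x => deriv (fun s => f s x) t

open Function

lemma dx_eq {f : ℝ → ℝ → ℝ} (hf : ContDiff ℝ (⊤ : ℕ∞) (uncurry f)) (t x : ℝ) :
    Dx f t x = fderiv ℝ (uncurry f) (t, x) (0, 1) := by
  have h1 : HasDerivAt (fun y => ((t, y) : ℝ × ℝ)) ((0:ℝ), (1:ℝ)) x := by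
    simpa using (hasDerivAt_const x t).prodMk (hasDerivAt_id x)
  have h2 := (hf.differentiable (by simp) (t, x)).hasFDerivAt
  exact (h2.comp_hasDerivAt x h1).deriv

lemma dt_eq {f : ℝ → ℝ → ℝ} (hf : ContDiff ℝ (⊤ : ℕ∞) (uncurry f)) (t x : ℝ) :
    Dt f t x = fderiv ℝ (uncurry f) (t, x) (1, 0) := by
  have h1 : HasDerivAt (fun s => ((s, x) : ℝ × ℝ)) ((1:ℝ), (0:ℝ)) t := by
    simpa using (hasDerivAt_id t).prodMk (hasDerivAt_const t x)
  have h2 := (hf.differentiable (by simp) (t, x)).hasFDerivAt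
  exact (h2.comp_hasDerivAt t h1).deriv

lemma contDiff_dx {f : ℝ → ℝ → ℝ} (hf : ContDiff ℝ (⊤ : ℕ∞) (uncurry f)) :
    ContDiff ℝ (⊤ : ℕ∞) (uncurry (Dx f)) := by
  have h : ContDiff ℝ (⊤ : ℕ∞) (fun p : ℝ × ℝ => fderiv ℝ (uncurry f) p ((0:ℝ), (1:ℝ))) :=
    (hf.fderiv_right (by simp)).clm_apply contDiff_const
  have : uncurry (Dx f) = fun p : ℝ × ℝ => fderiv ℝ (uncurry f) p ((0:ℝ), (1:ℝ)) := by
    funext p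
    exact dx_eq hf p.1 p.2
  rw [this]; exact h

lemma contDiff_dt {f : ℝ → ℝ → ℝ} (hf : ContDiff ℝ (⊤ : ℕ∞) (uncurry f)) :
    ContDiff ℝ (⊤ : ℕ∞) (uncurry (Dt f)) := by
  have h : ContDiff ℝ (⊤ : ℕ∞) (fun p : ℝ × ℝ => fderiv ℝ (uncurry f) p ((1:ℝ), (0:ℝ))) :=
    (hf.fderiv_right (by simp)).clm_apply contDiff_const
  have : uncurry (Dt f) = fun p : ℝ × ℝ => fderiv ℝ (uncurry f) p ((1:ℝ), (0:ℝ)) := by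
    funext p
    exact dt_eq hf p.1 p.2
  rw [this]; exact h

lemma hasDerivAt_comp_t {f : ℝ → ℝ → ℝ} (hf : ContDiff ℝ (⊤ : ℕ∞) (uncurry f))
    {g : ℝ → ℝ} {g' s : ℝ} (hg : HasDerivAt g g' s) :
    HasDerivAt (fun s => f s (g s)) (Dt f s (g s) + g' * Dx f s (g s)) s := by
  have h1 : HasDerivAt (fun s => ((s, g s) : ℝ × ℝ)) ((1:ℝ), g') s :=
    (hasDerivAt_id s).prodMk hg
  have h2 := (hf.differentiable (by simp) (s, g s)).hasFDerivAt
  have h3 := h2.comp_hasDerivAt s h1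
  have he : fderiv ℝ (uncurry f) (s, g s) (1, g') =
      Dt f s (g s) + g' * Dx f s (g s) := by
    rw [dt_eq hf, dx_eq hf]
    have hv : ((1:ℝ), g') = ((1:ℝ), (0:ℝ)) + g' • ((0:ℝ), (1:ℝ)) := by simp
    rw [hv, map_add, map_smul, smul_eq_mul]
  rwa [he] at h3

lemma clairaut {f : ℝ → ℝ → ℝ} (hf : ContDiff ℝ (⊤ : ℕ∞) (uncurry f)) (t x : ℝ) :
    Dt (Dx f) t x = Dx (Dt f) t x := by
  set F := uncurry f with hF
  have hd : ∀ p : ℝ × ℝ, HasFDerivAt F (fderiv ℝ F p) p := fun p =>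
    (hf.differentiable (by simp) p).hasFDerivAt
  have hd2 : HasFDerivAt (fderiv ℝ F) (fderiv ℝ (fderiv ℝ F) (t, x)) (t, x) :=
    (((hf.fderiv_right (m := (⊤ : ℕ∞)) (by simp)).differentiable (by simp)) (t, x)).hasFDerivAt
  have hsymm := second_derivative_symmetric hd hd2 ((1:ℝ), (0:ℝ)) ((0:ℝ), (1:ℝ))
  have e1 : Dt (Dx f) t x = fderiv ℝ (fderiv ℝ F) (t, x) (1, 0) (0, 1) := by
    rw [dt_eq (contDiff_dx hf)]
    have huf : uncurry (Dx f) =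
        fun p : ℝ × ℝ => (ContinuousLinearMap.apply ℝ ℝ ((0:ℝ), (1:ℝ))) (fderiv ℝ F p) := by
      funext p; exact dx_eq hf p.1 p.2
    rw [huf]
    have hc : HasFDerivAt
        (fun p : ℝ × ℝ => (ContinuousLinearMap.apply ℝ ℝ ((0:ℝ), (1:ℝ))) (fderiv ℝ F p))
        ((ContinuousLinearMap.apply ℝ ℝ ((0:ℝ), (1:ℝ))).comp (fderiv ℝ (fderiv ℝ F) (t, x)))
        (t, x) := (ContinuousLinearMap.apply ℝ ℝ ((0:ℝ), (1:ℝ))).hasFDerivAt.comp (t, x) hd2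
    rw [hc.fderiv]; rfl
  have e2 : Dx (Dt f) t x = fderiv ℝ (fderiv ℝ F) (t, x) (0, 1) (1, 0) := by
    rw [dx_eq (contDiff_dt hf)]
    have huf : uncurry (Dt f) =
        fun p : ℝ × ℝ => (ContinuousLinearMap.apply ℝ ℝ ((1:ℝ), (0:ℝ))) (fderiv ℝ F p) := by
      funext p; exact dt_eq hf p.1 p.2
    rw [huf]
    have hc : HasFDerivAt
        (fun p : ℝ × ℝ => (ContinuousLinearMap.apply ℝ ℝ ((1:ℝ), (0:ℝ))) (fderiv ℝ F p))
        ((ContinuousLinearMap.apply ℝ ℝ ((1:ℝ), (0:ℝ))).comp (fderiv ℝ (fderiv ℝ F) (t, x)))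
        (t, x) := (ContinuousLinearMap.apply ℝ ℝ ((1:ℝ), (0:ℝ))).hasFDerivAt.comp (t, x) hd2
    rw [hc.fderiv]; rfl
  rw [e1, e2, hsymm]

/-- Proposition 2.2: along the characteristic flow `q` of the generalized
Camassa–Holm equation `mₜ + (u+Γ)mₓ + 2uₓm = ∂ₓh(u) = h'(u)uₓ`, with
`m = u - uₓₓ` and `h(u) = (α+Γ)u + (β/3)u³ + (γ/4)u⁴`, one has
`m(t,q(t,x)) qₓ(t,x)² = m(0,x) + ∫₀ᵗ qₓ(s,x)² h'(u(s,q(s,x))) uₓ(s,q(s,x)) ds`. -/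
theorem m_qx_sq_identity
    (α β γ Γ T : ℝ) (hT : 0 < T)
    (u : ℝ → ℝ → ℝ) (hu : ContDiff ℝ (⊤ : ℕ∞) (Function.uncurry u))
    (m : ℝ → ℝ → ℝ) (hm : m = fun t x => u t x - Dx (Dx u) t x)
    (h' : ℝ → ℝ) (hh' : ∀ v : ℝ, h' v = (α + Γ) + β * v ^ 2 + γ * v ^ 3)
    (heq : ∀ t ∈ Set.Ico (0:ℝ) T, ∀ x : ℝ,
      Dt m t x + (u t x + Γ) * Dx m t x + 2 * Dx u t x * m t x
        = h' (u t x) * Dx u t x)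
    (q : ℝ → ℝ → ℝ) (hq : ContDiff ℝ (⊤ : ℕ∞) (Function.uncurry q))
    (hq0 : ∀ x : ℝ, q 0 x = x)
    (hq' : ∀ t ∈ Set.Ico (0:ℝ) T, ∀ x : ℝ, Dt q t x = u t (q t x) + Γ) :
    ∀ t ∈ Set.Ico (0:ℝ) T, ∀ x : ℝ,
      m t (q t x) * (Dx q t x) ^ 2
        = m 0 x + ∫ s in (0:ℝ)..t,
            (Dx q s x) ^ 2 * (h' (u s (q s x)) * Dx u s (q s x)) := by
  intro t ht x
  obtain ⟨ht0, htT⟩ := ht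
  have hmu : ContDiff ℝ (⊤ : ℕ∞) (uncurry m) := by
    rw [hm]
    exact hu.sub (contDiff_dx (contDiff_dx hu))
  have hqxu : ContDiff ℝ (⊤ : ℕ∞) (uncurry (Dx q)) := contDiff_dx hq
  have hux : ContDiff ℝ (⊤ : ℕ∞) (uncurry (Dx u)) := contDiff_dx hu
  -- helper: s ↦ q s x differentiable with deriv Dt q s x
  have hqt : ∀ s : ℝ, HasDerivAt (fun s => q s x) (Dt q s x) s := by
    intro s
    have hd : DifferentiableAt ℝ (fun s => q s x) s := by
      have : DifferentiableAt ℝ (fun s : ℝ => uncurry q (s, x)) s :=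
        (hq.differentiable (by simp) (s, x)).comp (f := fun s : ℝ => ((s, x) : ℝ × ℝ)) s
          ((differentiable_id.prodMk (differentiable_const x)) s)
      exact this
    exact hd.hasDerivAt
  have hqxt : ∀ s : ℝ, HasDerivAt (fun s => Dx q s x) (Dt (Dx q) s x) s := by
    intro s
    have hd : DifferentiableAt ℝ (fun s => Dx q s x) s := by
      have : DifferentiableAt ℝ (fun s : ℝ => uncurry (Dx q) (s, x)) s :=
        (hqxu.differentiable (by simp) (s, x)).comp (f := fun s : ℝ => ((s, x) : ℝ × ℝ)) s
          ((differentiable_id.prodMk (differentiable_const x)) s)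
      exact this
    exact hd.hasDerivAt
  have key : ∀ s ∈ Set.uIcc (0:ℝ) t,
      HasDerivAt (fun s => m s (q s x) * (Dx q s x) ^ 2)
        ((Dx q s x) ^ 2 * (h' (u s (q s x)) * Dx u s (q s x))) s := by
    intro s hs
    rw [Set.uIcc_of_le ht0] at hs
    have hsIco : s ∈ Set.Ico (0:ℝ) T := ⟨hs.1, lt_of_le_of_lt hs.2 htT⟩
    have hm1 := hasDerivAt_comp_t hmu (hqt s)
    have hpow : HasDerivAt (fun s => (Dx q s x) ^ 2)
        (2 * (Dx q s x) ^ 1 * Dt (Dx q) s x) s := (hqxt s).pow 2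
    have hprod := hm1.mul hpow
    -- compute Dt (Dx q) s x
    have hDtDx : Dt (Dx q) s x = Dx u s (q s x) * Dx q s x := by
      rw [clairaut hq]
      have hfun : (fun y => Dt q s y) = fun y => u s (q s y) + Γ :=
        funext fun y => hq' s hsIco y
      have hqd : HasDerivAt (fun y => q s y) (Dx q s x) x := by
        have hd : DifferentiableAt ℝ (fun y => q s y) x := by
          have : DifferentiableAt ℝ (fun y : ℝ => uncurry q (s, y)) x :=
            (hq.differentiable (by simp) (s, x)).comp x
              ((differentiable_const s).prodMk differentiable_id x)
          exact this
        exact hd.hasDerivAt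
      have hud : HasDerivAt (u s) (Dx u s (q s x)) (q s x) := by
        have hd : DifferentiableAt ℝ (u s) (q s x) := by
          have : DifferentiableAt ℝ (fun y : ℝ => uncurry u (s, y)) (q s x) :=
            (hu.differentiable (by simp) (s, q s x)).comp (q s x)
              ((differentiable_const s).prodMk differentiable_id (q s x))
          exact this
        exact hd.hasDerivAt
      have h2 : HasDerivAt (fun y => u s (q s y) + Γ)
          (Dx u s (q s x) * Dx q s x) x := (hud.comp x hqd).add_const Γ
      show deriv (fun y => Dt q s y) x = _
      rw [hfun]
      exact h2.deriv
    have hval : (Dx q s x) ^ 2 * (h' (u s (q s x)) * Dx u s (q s x))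
        = (Dt m s (q s x) + Dt q s x * Dx m s (q s x)) * (Dx q s x) ^ 2
          + m s (q s x) * (2 * (Dx q s x) ^ 1 * Dt (Dx q) s x) := by
      rw [hq' s hsIco x, hDtDx]
      have hE := heq s hsIco (q s x)
      nlinarith [hE, sq_nonneg (Dx q s x)]
    rw [hval]
    exact hprod
  have hcont : ContinuousOn
      (fun s => (Dx q s x) ^ 2 * (h' (u s (q s x)) * Dx u s (q s x)))
      (Set.uIcc (0:ℝ) t) := by
    apply Continuous.continuousOn
    have cq : Continuous (fun s => q s x) :=
      hq.continuous.comp (continuous_id.prodMk continuous_const)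
    have cqx : Continuous (fun s => Dx q s x) :=
      hqxu.continuous.comp (continuous_id.prodMk continuous_const)
    have cu : Continuous (fun s => u s (q s x)) :=
      hu.continuous.comp (continuous_id.prodMk cq)
    have cux : Continuous (fun s => Dx u s (q s x)) :=
      hux.continuous.comp (continuous_id.prodMk cq)
    have ch : Continuous (fun s => h' (u s (q s x))) := by
      have : (fun s => h' (u s (q s x)))
          = fun s => (α + Γ) + β * (u s (q s x)) ^ 2 + γ * (u s (q s x)) ^ 3 :=
        funext fun s => hh' _
      rw [this]
      continuity
    exact (cqx.pow 2).mul (ch.mul cux)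
  have hftc := intervalIntegral.integral_eq_sub_of_hasDerivAt key
    (hcont.intervalIntegrable)
  have hq00 : q 0 x = x := hq0 x
  have hdq0 : Dx q 0 x = 1 := by
    show deriv (q 0) x = 1
    have : q 0 = id := funext hq0
    rw [this, deriv_id]
  rw [hftc, hq00, hdq0]
  ring
end

section
/- Let m : ℝ → ℝ be continuous, bounded and Lebesgue integrable, and suppose there exists x₀ ∈ ℝ such that m(x) ≤ 0 for all x ≤ x₀ and m(x) ≥ 0 for all x ≥ x₀. Define u(x) = (1/2)∫_ℝ e^{−|x−ξ|} m(ξ) dξ. Then u'(x) ≥ −sup_{y∈ℝ} |u(y)| for every x ∈ ℝ. -/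
/-!
Splitting the convolution at `ξ = x` gives `u = ½ (e^{-x} L + e^{x} R)` with
`L(x) = ∫_{ξ ≤ x} e^{ξ} m` and `R(x) = ∫_{ξ > x} e^{-ξ} m`,
hence `u' = ½ (e^{x} R - e^{-x} L)`, `u' + u = e^{x} R` and `u' - u = -e^{-x} L`.
To the right of `x₀` the sign of `m` gives `R ≥ 0`, so `u' ≥ -u`; to the left it gives
`L ≤ 0`, so `u' ≥ u`. Either way `u' ≥ -sup |u|`.
-/

open MeasureTheory Set Real

section HalfLineIntegrals

variable {E : Type*} [NormedAddCommGroup E] [NormedSpace ℝ E] [CompleteSpace E] {f : ℝ → E}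

theorem hasDerivAt_setIntegral_Iic (hf : Continuous f) (hint : ∀ a, IntegrableOn f (Iic a))
    (x : ℝ) : HasDerivAt (fun y => ∫ t in Iic y, f t) (f x) x := by
  have hFTC := (intervalIntegral.integral_hasDerivAt_right (hf.intervalIntegrable x x)
    hf.aestronglyMeasurable.stronglyMeasurableAtFilter hf.continuousAt).const_add
    (∫ t in Iic x, f t)
  refine hFTC.congr_of_eventuallyEq (Filter.Eventually.of_forall fun y => ?_)
  dsimp only
  rw [← intervalIntegral.integral_Iic_sub_Iic (hint x) (hint y), add_sub_cancel]

theorem hasDerivAt_setIntegral_Ioi (hf : Continuous f) (hint : ∀ a, IntegrableOn f (Ioi a))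
    (x : ℝ) : HasDerivAt (fun y => ∫ t in Ioi y, f t) (-f x) x := by
  have hFTC := (intervalIntegral.integral_hasDerivAt_right (hf.intervalIntegrable x x)
    hf.aestronglyMeasurable.stronglyMeasurableAtFilter hf.continuousAt).const_sub
    (∫ t in Ioi x, f t)
  refine hFTC.congr_of_eventuallyEq (Filter.Eventually.of_forall fun y => ?_)
  dsimp only
  rw [← intervalIntegral.integral_Ioi_sub_Ioi' (hint x) (hint y), sub_sub_cancel]

end HalfLineIntegrals

section ExponentialKernel

noncomputable def expIntegralIic (m : ℝ → ℝ) (x : ℝ) : ℝ := ∫ ξ in Iic x, exp ξ * m ξ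

noncomputable def expNegIntegralIoi (m : ℝ → ℝ) (x : ℝ) : ℝ :=
  ∫ ξ in Ioi x, exp (-ξ) * m ξ

variable {m : ℝ → ℝ}

theorem integrableOn_Iic_exp_mul (hm : Integrable m) (a : ℝ) :
    IntegrableOn (fun ξ => exp ξ * m ξ) (Iic a) := by
  refine hm.integrableOn.bdd_mul (c := exp a) continuous_exp.aestronglyMeasurable ?_
  refine (ae_restrict_iff' measurableSet_Iic).2 (Filter.Eventually.of_forall fun ξ hξ => ?_)
  rw [norm_of_nonneg (exp_pos ξ).le]
  exact exp_le_exp.2 hξ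

theorem integrableOn_Ioi_exp_neg_mul (hm : Integrable m) (a : ℝ) :
    IntegrableOn (fun ξ => exp (-ξ) * m ξ) (Ioi a) := by
  refine hm.integrableOn.bdd_mul (c := exp (-a))
    (continuous_exp.comp continuous_neg).aestronglyMeasurable ?_
  refine (ae_restrict_iff' measurableSet_Ioi).2 (Filter.Eventually.of_forall fun ξ hξ => ?_)
  rw [norm_of_nonneg (exp_pos _).le]
  exact exp_le_exp.2 (neg_le_neg (le_of_lt hξ))

theorem norm_exp_neg_abs_le_one (x : ℝ) : ‖exp (-|x|)‖ ≤ 1 := by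
  rw [norm_of_nonneg (exp_pos _).le, exp_le_one_iff, neg_nonpos]
  exact abs_nonneg x

theorem integrable_exp_neg_abs_sub_mul (hm : Integrable m) (x : ℝ) :
    Integrable (fun ξ => exp (-|x - ξ|) * m ξ) :=
  hm.bdd_mul (by fun_prop) (Filter.Eventually.of_forall fun ξ => norm_exp_neg_abs_le_one _)

theorem abs_integral_exp_neg_abs_sub_mul_le (hm : Integrable m) (x : ℝ) :
    |∫ ξ, exp (-|x - ξ|) * m ξ| ≤ ∫ ξ, |m ξ| := by
  rw [← norm_eq_abs]
  refine norm_integral_le_of_norm_le hm.abs (Filter.Eventually.of_forall fun ξ => ?_)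
  rw [norm_mul, norm_eq_abs (m ξ)]
  exact mul_le_of_le_one_left (abs_nonneg _) (norm_exp_neg_abs_le_one _)

theorem integral_exp_neg_abs_sub_mul (hm : Integrable m) (x : ℝ) :
    ∫ ξ, exp (-|x - ξ|) * m ξ =
      exp (-x) * expIntegralIic m x + exp x * expNegIntegralIoi m x := by
  have hint := integrable_exp_neg_abs_sub_mul hm x
  rw [← intervalIntegral.integral_Iic_add_Ioi hint.integrableOn hint.integrableOn,
    expIntegralIic, expNegIntegralIoi, ← integral_const_mul, ← integral_const_mul]
  congr 1
  · refine setIntegral_congr_fun measurableSet_Iic fun ξ hξ => ?_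
    rw [abs_of_nonneg (sub_nonneg.2 hξ), ← mul_assoc, ← exp_add]
    ring_nf
  · refine setIntegral_congr_fun measurableSet_Ioi fun ξ hξ => ?_
    rw [abs_of_neg (sub_neg.2 hξ), ← mul_assoc, ← exp_add]
    ring_nf

theorem hasDerivAt_expIntegralIic (hm_cont : Continuous m) (hm : Integrable m) (x : ℝ) :
    HasDerivAt (expIntegralIic m) (exp x * m x) x :=
  hasDerivAt_setIntegral_Iic (by fun_prop) (integrableOn_Iic_exp_mul hm) x

theorem hasDerivAt_expNegIntegralIoi (hm_cont : Continuous m) (hm : Integrable m) (x : ℝ) :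
    HasDerivAt (expNegIntegralIoi m) (-(exp (-x) * m x)) x :=
  hasDerivAt_setIntegral_Ioi (by fun_prop) (integrableOn_Ioi_exp_neg_mul hm) x

-- The contributions `± m x` of the two moving endpoints cancel.
theorem hasDerivAt_integral_exp_neg_abs_sub_mul (hm_cont : Continuous m) (hm : Integrable m)
    (x : ℝ) :
    HasDerivAt (fun y => ∫ ξ, exp (-|y - ξ|) * m ξ)
      (exp x * expNegIntegralIoi m x - exp (-x) * expIntegralIic m x) x := by
  have h := ((hasDerivAt_neg x).exp.mul (hasDerivAt_expIntegralIic hm_cont hm x)).add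
    ((hasDerivAt_exp x).mul (hasDerivAt_expNegIntegralIoi hm_cont hm x))
  rw [funext (integral_exp_neg_abs_sub_mul hm)]
  exact h.congr_deriv (by ring)

theorem expIntegralIic_nonpos {x : ℝ} (h : ∀ ξ ≤ x, m ξ ≤ 0) : expIntegralIic m x ≤ 0 :=
  setIntegral_nonpos measurableSet_Iic fun ξ hξ =>
    mul_nonpos_of_nonneg_of_nonpos (exp_pos ξ).le (h ξ hξ)

theorem expNegIntegralIoi_nonneg {x : ℝ} (h : ∀ ξ > x, 0 ≤ m ξ) :
    0 ≤ expNegIntegralIoi m x :=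
  setIntegral_nonneg measurableSet_Ioi fun ξ hξ => mul_nonneg (exp_pos _).le (h ξ hξ)

end ExponentialKernel

theorem lower_bound_ux_general
    (m : ℝ → ℝ) (hm_cont : Continuous m)
    (hm_int : MeasureTheory.Integrable m)
    (x₀ : ℝ) (hneg : ∀ x : ℝ, x ≤ x₀ → m x ≤ 0) (hpos : ∀ x : ℝ, x₀ ≤ x → 0 ≤ m x)
    (u : ℝ → ℝ)
    (hu : ∀ x : ℝ, u x = (1/2) * ∫ ξ : ℝ, Real.exp (-|x - ξ|) * m ξ) :
    ∀ x : ℝ, -(⨆ y : ℝ, |u y|) ≤ deriv u x := by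
  intro x
  have hu_deriv : deriv u x =
      (1/2) * (exp x * expNegIntegralIoi m x - exp (-x) * expIntegralIic m x) := by
    rw [funext hu]
    exact ((hasDerivAt_integral_exp_neg_abs_sub_mul hm_cont hm_int x).const_mul _).deriv
  have hu_eq : u x = (1/2) * (exp (-x) * expIntegralIic m x + exp x * expNegIntegralIoi m x) := by
    rw [hu, integral_exp_neg_abs_sub_mul hm_int]
  have hu_bdd : BddAbove (range fun y => |u y|) := by
    refine ⟨(1/2) * ∫ ξ, |m ξ|, forall_mem_range.2 fun y => ?_⟩
    rw [hu, abs_mul, abs_of_pos one_half_pos]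
    exact mul_le_mul_of_nonneg_left (abs_integral_exp_neg_abs_sub_mul_le hm_int y)
      one_half_pos.le
  have hu_le_sup : |u x| ≤ ⨆ y, |u y| := le_ciSup hu_bdd x
  rcases le_total x₀ x with hx | hx
  · have hR : 0 ≤ exp x * expNegIntegralIoi m x := mul_nonneg (exp_pos x).le
      (expNegIntegralIoi_nonneg fun ξ hξ => hpos ξ (hx.trans hξ.le))
    linarith [le_abs_self (u x)]
  · have hL : exp (-x) * expIntegralIic m x ≤ 0 := mul_nonpos_of_nonneg_of_nonpos (exp_pos _).le
      (expIntegralIic_nonpos fun ξ hξ => hneg ξ (hξ.trans hx))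
    linarith [neg_abs_le (u x)]

/-- Pointwise core of Theorem 1.2: if `m` is continuous, bounded and integrable,
nonpositive on `(-∞, x₀]` and nonnegative on `[x₀, ∞)`, and `u = G ∗ m` with
`G(x) = (1/2)e^{-|x|}`, then `u'(x) ≥ -sup_y |u(y)|` for every `x`. -/
theorem lower_bound_ux
    (m : ℝ → ℝ) (hm_cont : Continuous m)
    (C : ℝ) (hm_bdd : ∀ x : ℝ, |m x| ≤ C)
    (hm_int : MeasureTheory.Integrable m)
    (x₀ : ℝ) (hneg : ∀ x : ℝ, x ≤ x₀ → m x ≤ 0) (hpos : ∀ x : ℝ, x₀ ≤ x → 0 ≤ m x)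
    (u : ℝ → ℝ)
    (hu : ∀ x : ℝ, u x = (1/2) * ∫ ξ : ℝ, Real.exp (-|x - ξ|) * m ξ) :
    ∀ x : ℝ, -(⨆ y : ℝ, |u y|) ≤ deriv u x :=
  lower_bound_ux_general m hm_cont hm_int x₀ hneg hpos u hu
end

section
/- Let T > 0, ε ∈ (0,1), and let y : [0,T) → ℝ be differentiable with y(0) < 0 and y'(t) ≤ −(1/2)y(t)² + (1/2)(1−ε)y(0)² for all t ∈ [0,T). Then y(t) ≤ y(0) for all t ∈ [0,T), and T ≤ −2/(ε·y(0)); in particular T is finite. -/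
/-!
While `y < 0`, the substitution `z = -1/y` linearises the Riccati inequality. First, `y` can
never climb back to `y(0)`: at such a point the inequality gives `y' ≤ -(ε/2) y(0)² < 0`.
Hence `y ≤ y(0) < 0`, so `y(0)² ≤ y²` and `y' ≤ -(ε/2) y²`, i.e. `z' = y'/y² ≤ -ε/2`.
Then `0 < z(t) ≤ z(0) - (ε/2) t`, which bounds `t` by `2 z(0)/ε = -2/(ε y(0))`.
-/

open Set

theorem apply_le_left_of_deriv_neg_of_eq_left {f f' : ℝ → ℝ} {a b : ℝ}
    (hf : ∀ x ∈ Ico a b, HasDerivWithinAt f (f' x) (Ico a b) x)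
    (hneg : ∀ x ∈ Ico a b, f x = f a → f' x < 0) {t : ℝ} (ht : t ∈ Ico a b) :
    f t ≤ f a := by
  have hIcc : Icc a t ⊆ Ico a b := Icc_subset_Ico_right ht.2
  have hIco : Ico a t ⊆ Ico a b := Ico_subset_Ico_right ht.2.le
  exact image_le_of_deriv_right_lt_deriv_boundary' (B := fun _ => f a) (B' := 0)
    (fun x hx => (hf x (hIcc hx)).continuousWithinAt.mono hIcc)
    (fun x hx => (hf x (hIco hx)).mono_of_mem_nhdsWithin (Ico_mem_nhdsGE_of_mem (hIco hx)))
    le_rfl continuousOn_const (fun x _ => hasDerivWithinAt_const x _ _)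
    (fun x hx => hneg x (hIco hx)) ⟨ht.1, le_rfl⟩

theorem mul_sub_lt_neg_inv_of_deriv_le_neg_mul_sq {f f' : ℝ → ℝ} {a b c : ℝ}
    (hf : ∀ x ∈ Ico a b, HasDerivWithinAt f (f' x) (Ico a b) x)
    (hneg : ∀ x ∈ Ico a b, f x < 0)
    (hf' : ∀ x ∈ Ico a b, f' x ≤ -c * f x ^ 2) {t : ℝ} (ht : t ∈ Ico a b) :
    c * (t - a) < -(f a)⁻¹ := by
  have hne : ∀ x ∈ Ico a b, f x ≠ 0 := fun x hx => (hneg x hx).ne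
  have hanti : AntitoneOn (fun s => -(f s)⁻¹ + c * s) (Ico a b) := by
    refine antitoneOn_of_hasDerivWithinAt_nonpos (convex_Ico a b)
      (f' := fun s => f' s / f s ^ 2 + c) ?_ ?_ ?_
    · exact ((ContinuousOn.inv₀ (fun x hx => (hf x hx).continuousWithinAt) hne).neg).add
        (continuousOn_const.mul continuousOn_id)
    · rw [interior_Ico]
      intro x hx
      have hx' : x ∈ Ico a b := Ioo_subset_Ico_self hx
      refine ((((hf x hx').mono Ioo_subset_Ico_self).inv (hne x hx')).neg.add
        ((hasDerivWithinAt_id x _).const_mul c)).congr_deriv ?_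
      ring
    · rw [interior_Ico]
      intro x hx
      have hx' : x ∈ Ico a b := Ioo_subset_Ico_self hx
      have hsq : 0 < f x ^ 2 := pow_two_pos_of_ne_zero (hne x hx')
      rw [← le_neg_iff_add_nonpos_right, div_le_iff₀ hsq]
      linarith [hf' x hx']
  have hta : -(f t)⁻¹ + c * t ≤ -(f a)⁻¹ + c * a :=
    hanti ⟨le_rfl, ht.1.trans_lt ht.2⟩ ht ht.1
  have hinv : (f t)⁻¹ < 0 := inv_lt_zero.mpr (hneg t ht)
  rw [mul_sub]
  linarith

theorem riccati_blowup_general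
    (T ε : ℝ) (hε : ε ∈ Set.Ioo (0:ℝ) 1)
    (y y' : ℝ → ℝ)
    (hy : ∀ t ∈ Set.Ico (0:ℝ) T, HasDerivWithinAt y (y' t) (Set.Ico (0:ℝ) T) t)
    (hy0 : y 0 < 0)
    (hineq : ∀ t ∈ Set.Ico (0:ℝ) T,
      y' t ≤ -(1/2) * y t ^ 2 + (1/2) * (1 - ε) * y 0 ^ 2) :
    (∀ t ∈ Set.Ico (0:ℝ) T, y t ≤ y 0) ∧ T ≤ -2 / (ε * y 0) := by
  obtain ⟨hε0, hε1⟩ := hε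
  have hle : ∀ t ∈ Ico 0 T, y t ≤ y 0 := fun t ht =>
    apply_le_left_of_deriv_neg_of_eq_left hy (fun x hx hx0 => by
      nlinarith [hineq x hx, hx0, mul_pos hε0 (pow_two_pos_of_ne_zero hy0.ne)]) ht
  have hneg : ∀ t ∈ Ico 0 T, y t < 0 := fun t ht => (hle t ht).trans_lt hy0
  have hriccati : ∀ t ∈ Ico 0 T, y' t ≤ -(ε / 2) * y t ^ 2 := by
    intro t ht
    have hsq : y 0 ^ 2 ≤ y t ^ 2 := by nlinarith [hle t ht, hneg t ht]
    nlinarith [hineq t ht, mul_le_mul_of_nonneg_left hsq (sub_nonneg.2 hε1.le)]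
  refine ⟨hle, ?_⟩
  by_contra! hT
  have hεy0 : ε * y 0 < 0 := mul_neg_of_pos_of_neg hε0 hy0
  have hC : 0 ≤ -2 / (ε * y 0) := div_nonneg_of_nonpos (by norm_num) hεy0.le
  have hbound := mul_sub_lt_neg_inv_of_deriv_le_neg_mul_sq hy hneg hriccati ⟨hC, hT⟩
  have hC_eq : ε / 2 * (-2 / (ε * y 0) - 0) = -(y 0)⁻¹ := by
    field_simp
    ring
  linarith

/-- Riccati-type blow-up argument concluding the proof of Theorem 1.3: if
`y : [0,T) → ℝ` is differentiable with `y(0) < 0` and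
`y'(t) ≤ -(1/2)y(t)² + (1/2)(1-ε)y(0)²` on `[0,T)` with `ε ∈ (0,1)`, then
`y(t) ≤ y(0)` on `[0,T)` and `T ≤ -2/(ε y(0))`; in particular `T` is finite. -/
theorem riccati_blowup
    (T ε : ℝ) (hT : 0 < T) (hε : ε ∈ Set.Ioo (0:ℝ) 1)
    (y y' : ℝ → ℝ)
    (hy : ∀ t ∈ Set.Ico (0:ℝ) T, HasDerivWithinAt y (y' t) (Set.Ico (0:ℝ) T) t)
    (hy0 : y 0 < 0)
    (hineq : ∀ t ∈ Set.Ico (0:ℝ) T,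
      y' t ≤ -(1/2) * y t ^ 2 + (1/2) * (1 - ε) * y 0 ^ 2) :
    (∀ t ∈ Set.Ico (0:ℝ) T, y t ≤ y 0) ∧ T ≤ -2 / (ε * y 0) :=
  riccati_blowup_general T ε hε y y' hy hy0 hineq
end

section
/- Let α, Γ, b, η ∈ ℝ with η² = 2 + 2b + α + Γ. Let u : ℝ² → ℝ be smooth in the variables (t,x) and set m = u − uₓₓ. Define the coefficient functions a₁ = m + b, c₁ = −[(u+Γ)m + (b+1)u + b(Γ+1) − ηuₓ], a₂ = η, c₂ = −[η(1+u+Γ) − uₓ], a₃ = m + b + 1, c₃ = ηuₓ − (u+Γ)(m+1) − (u+1)(b+1) − Γb. Then the structure equation dθ₃ = θ₁ ∧ θ₂ for the 1-forms θᵢ = aᵢ dx + cᵢ dt, i.e. the identity ∂ₓc₃ − ∂ₜa₃ = a₁c₂ − a₂c₁, holds at every point of ℝ² if and only if u satisfies the Dullin–Gottwald–Holm equation mₜ + umₓ + 2uₓm = αuₓ + Γuₓₓₓ on ℝ². -/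
lemma smooth_Dx (f : ℝ → ℝ → ℝ) (hf : ContDiff ℝ (⊤ : ℕ∞) (Function.uncurry f)) :
    ContDiff ℝ (⊤ : ℕ∞) (Function.uncurry (Dx f)) := by
  have hd : Function.uncurry (Dx f)
      = fun p : ℝ × ℝ => fderiv ℝ (Function.uncurry f) p (0, 1) := by
    funext p
    obtain ⟨t, x⟩ := p
    have h2 : HasDerivAt (fun y : ℝ => ((t, y) : ℝ × ℝ)) (0, 1) x :=
      (hasDerivAt_const x t).prodMk (hasDerivAt_id x)
    have h3 : HasDerivAt (f t) (fderiv ℝ (Function.uncurry f) (t, x) (0, 1)) x :=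
      (((hf.differentiable (by simp)) (t, x)).hasFDerivAt).comp_hasDerivAt x h2
    exact h3.deriv
  rw [hd]
  exact (hf.fderiv_right (by simp)).clm_apply contDiff_const

lemma sect_contDiff (f : ℝ → ℝ → ℝ) (hf : ContDiff ℝ (⊤ : ℕ∞) (Function.uncurry f)) (t : ℝ) :
    ContDiff ℝ (⊤ : ℕ∞) (f t) := hf.comp (contDiff_const.prodMk contDiff_id)

lemma sect_hasDerivAt (f : ℝ → ℝ → ℝ) (hf : ContDiff ℝ (⊤ : ℕ∞) (Function.uncurry f)) (t x : ℝ) :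
    HasDerivAt (f t) (Dx f t x) x :=
  (((sect_contDiff f hf t).differentiable (by simp)) x).hasDerivAt

/-- Theorem 1.4 (geometric integrability of the Dullin–Gottwald–Holm equation):
with the stated coefficient functions `aᵢ, cᵢ` for the 1-forms `θᵢ = aᵢ dx + cᵢ dt`
and `η² = 2 + 2b + α + Γ`, the structure equation `dθ₃ = θ₁ ∧ θ₂`, i.e.
`∂ₓc₃ - ∂ₜa₃ = a₁c₂ - a₂c₁`, holds everywhere iff `u` satisfies the DGH equation
`mₜ + umₓ + 2uₓm = αuₓ + Γuₓₓₓ`, where `m = u - uₓₓ`. -/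
theorem dgh_pseudospherical
    (α Γ b η : ℝ) (hη : η ^ 2 = 2 + 2 * b + α + Γ)
    (u : ℝ → ℝ → ℝ) (hu : ContDiff ℝ (⊤ : ℕ∞) (Function.uncurry u))
    (m : ℝ → ℝ → ℝ) (hm : m = fun t x => u t x - Dx (Dx u) t x)
    (a₁ c₁ a₂ c₂ a₃ c₃ : ℝ → ℝ → ℝ)
    (ha₁ : a₁ = fun t x => m t x + b)
    (hc₁ : c₁ = fun t x =>
      -((u t x + Γ) * m t x + (b + 1) * u t x + b * (Γ + 1) - η * Dx u t x))
    (ha₂ : a₂ = fun _ _ => η)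
    (hc₂ : c₂ = fun t x => -(η * (1 + u t x + Γ) - Dx u t x))
    (ha₃ : a₃ = fun t x => m t x + b + 1)
    (hc₃ : c₃ = fun t x =>
      η * Dx u t x - (u t x + Γ) * (m t x + 1) - (u t x + 1) * (b + 1) - Γ * b) :
    (∀ t x : ℝ, Dx c₃ t x - Dt a₃ t x = a₁ t x * c₂ t x - a₂ t x * c₁ t x) ↔
    (∀ t x : ℝ, Dt m t x + u t x * Dx m t x + 2 * Dx u t x * m t x
        = α * Dx u t x + Γ * Dx (Dx (Dx u)) t x) := by
  have h1 : ContDiff ℝ (⊤ : ℕ∞) (Function.uncurry (Dx u)) := smooth_Dx u hu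
  have h2 : ContDiff ℝ (⊤ : ℕ∞) (Function.uncurry (Dx (Dx u))) := smooth_Dx _ h1
  have key : ∀ t x : ℝ,
      Dx c₃ t x - Dt a₃ t x - (a₁ t x * c₂ t x - a₂ t x * c₁ t x)
      = -(Dt m t x + u t x * Dx m t x + 2 * Dx u t x * m t x
          - (α * Dx u t x + Γ * Dx (Dx (Dx u)) t x)) := by
    intro t x
    have hU : HasDerivAt (u t) (Dx u t x) x := sect_hasDerivAt u hu t x
    have hUx : HasDerivAt (Dx u t) (Dx (Dx u) t x) x := sect_hasDerivAt _ h1 t x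
    have hUxx : HasDerivAt (Dx (Dx u) t) (Dx (Dx (Dx u)) t x) x := sect_hasDerivAt _ h2 t x
    have hmt : m t = fun y => u t y - Dx (Dx u) t y := by rw [hm]
    have hM : HasDerivAt (m t) (Dx u t x - Dx (Dx (Dx u)) t x) x := by
      rw [hmt]; exact hU.sub hUxx
    have hDxm : Dx m t x = Dx u t x - Dx (Dx (Dx u)) t x := hM.deriv
    have hc3 : HasDerivAt (c₃ t)
        (η * Dx (Dx u) t x
          - (Dx u t x * (m t x + 1) + (u t x + Γ) * (Dx u t x - Dx (Dx (Dx u)) t x))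
          - Dx u t x * (b + 1)) x := by
      rw [hc₃]
      exact (((hUx.const_mul η).sub ((hU.add_const Γ).mul (hM.add_const 1))).sub
        ((hU.add_const 1).mul_const (b + 1))).sub_const (Γ * b)
    have hDxc3 : Dx c₃ t x
        = η * Dx (Dx u) t x
          - (Dx u t x * (m t x + 1) + (u t x + Γ) * (Dx u t x - Dx (Dx (Dx u)) t x))
          - Dx u t x * (b + 1) := hc3.deriv
    have hDta3 : Dt a₃ t x = Dt m t x := by
      simp only [Dt, ha₃]
      rw [show (fun s => m s x + b + 1) = fun s => m s x + (b + 1) from by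
        funext s; ring]
      rw [deriv_add_const]
    have huxx : Dx (Dx u) t x = u t x - m t x := by rw [hm]; ring
    rw [hDxc3, hDta3, ha₁, hc₁, ha₂, hc₂, hDxm, huxx]
    simp only
    linear_combination (Dx u t x) * hη
  constructor <;> intro h t x <;> have h' := h t x <;> have k := key t x <;> linarith
end

section
/- Let α, β, γ, Γ ∈ ℝ and let c : ℝ → ℝ be differentiable and satisfy, for every v ∈ ℝ, the two equations ((γ/4)v² + (β/6)v + 1/8)·c(v) = γv³ + βv² + v + Γ + α and (1/16 + (β/12)v + (γ/4)v²)·c'(v) + ((γ/4)v + β/12)·c(v) = 1/2 + 2βv + 3γv². Then β = 0, γ = 0, and c(v) = 8(v + α + Γ) for all v ∈ ℝ. -/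
/-!
Write `Q v = γ v²/4 + β v/6 + 1/8` for the coefficient of `c` in the first equation. Differentiating
the first equation and subtracting the result from twice the second gives `(γ/4) v² c' = 2βv + 3γv²`.
Multiplying by `Q²` and eliminating `Q c` and `Q c'` through the first equation and its derivative
leaves a polynomial identity in `v` of degree six, whose coefficients of `v` and `v⁶` are `β/32`
and `γ³/8`. Hence `β = γ = 0`, and the first equation becomes `c v / 8 = v + Γ + α`.
-/

open Polynomial

theorem eq_zero_of_forall_sum_mul_pow_eq_zero {R : Type*} [CommRing R] [IsDomain R] [Infinite R]
    {n : ℕ} (a : Fin n → R) (h : ∀ x : R, ∑ i, a i * x ^ (i : ℕ) = 0) : a = 0 := by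
  set p : R[X] := ∑ i, C (a i) * X ^ (i : ℕ)
  have hp : p = 0 := Polynomial.funext fun x => by simpa [p, eval_finsetSum] using h x
  funext i
  simpa [p, finsetSum_coeff, coeff_C_mul_X_pow, Fin.val_inj] using congrArg (coeff · i) hp

theorem mul_deriv_eq_of_hasDerivAt_of_mul_eq {𝕜 : Type*} [NontriviallyNormedField 𝕜]
    {q c p : 𝕜 → 𝕜} {q' p' v : 𝕜} (hq : HasDerivAt q q' v) (hc : DifferentiableAt 𝕜 c v)
    (hp : HasDerivAt p p' v) (h : ∀ x, q x * c x = p x) :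
    q' * c v + q v * deriv c v = p' := by
  have hqc := hq.mul hc.hasDerivAt
  rw [show q * c = p from funext h] at hqc
  exact hqc.unique hp

theorem deriv_first_matching_equation (α β γ Γ : ℝ) {c : ℝ → ℝ} (hc : Differentiable ℝ c)
    (h1 : ∀ v : ℝ,
      ((γ / 4) * v ^ 2 + (β / 6) * v + 1 / 8) * c v = γ * v ^ 3 + β * v ^ 2 + v + Γ + α)
    (v : ℝ) :
    (γ / 2 * v + β / 6) * c v + ((γ / 4) * v ^ 2 + (β / 6) * v + 1 / 8) * deriv c v
      = 3 * γ * v ^ 2 + 2 * β * v + 1 :=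
  mul_deriv_eq_of_hasDerivAt_of_mul_eq
    ((((hasDerivAt_pow 2 v).const_mul (γ / 4)).add
      ((hasDerivAt_id' v).const_mul (β / 6))).add_const (1 / 8) |>.congr_deriv (by ring))
    (hc v)
    ((((((hasDerivAt_pow 3 v).const_mul γ).add ((hasDerivAt_pow 2 v).const_mul β)).add
      (hasDerivAt_id' v)).add_const Γ).add_const α |>.congr_deriv (by ring))
    h1

/-- Key step in the proof of Theorem 1.5: matching the order-ε² terms of the
generalized Camassa–Holm equation with Dubrovin's Hamiltonian perturbation ansatz
yields the displayed system for `c(v)`; its solvability forces `β = γ = 0` and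
`c(v) = 8(v + α + Γ)`. -/
theorem dubrovin_order_two_matching
    (α β γ Γ : ℝ) (c : ℝ → ℝ) (hc : Differentiable ℝ c)
    (h1 : ∀ v : ℝ,
      ((γ / 4) * v ^ 2 + (β / 6) * v + 1 / 8) * c v
        = γ * v ^ 3 + β * v ^ 2 + v + Γ + α)
    (h2 : ∀ v : ℝ,
      (1 / 16 + (β / 12) * v + (γ / 4) * v ^ 2) * deriv c v
          + ((γ / 4) * v + β / 12) * c v
        = 1 / 2 + 2 * β * v + 3 * γ * v ^ 2) :
    β = 0 ∧ γ = 0 ∧ ∀ v : ℝ, c v = 8 * (v + α + Γ) := by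
  have h3 := deriv_first_matching_equation α β γ Γ hc h1
  have hE (v : ℝ) : γ / 4 * v ^ 2 * deriv c v = 2 * β * v + 3 * γ * v ^ 2 := by
    linear_combination 2 * h2 v - h3 v
  have hF (v : ℝ) :
      β / 32 * v + (γ / 64 + β * γ * (Γ + α) / 24 + β ^ 2 / 12) * v ^ 2
        + (3 * β * γ / 16 + γ ^ 2 * (Γ + α) / 8 + β ^ 3 / 18) * v ^ 3
        + (5 * γ ^ 2 / 32 + 5 * β ^ 2 * γ / 24) * v ^ 4 + 7 * β * γ ^ 2 / 24 * v ^ 5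
        + γ ^ 3 / 8 * v ^ 6 = 0 := by
    linear_combination (-((γ / 4) * v ^ 2 + (β / 6) * v + 1 / 8) ^ 2) * hE v
      + (γ / 4 * v ^ 2 * ((γ / 4) * v ^ 2 + (β / 6) * v + 1 / 8)) * h3 v
      - (γ / 4 * v ^ 2 * (γ / 2 * v + β / 6)) * h1 v
  have hcoeff := eq_zero_of_forall_sum_mul_pow_eq_zero
    ![0, β / 32, γ / 64 + β * γ * (Γ + α) / 24 + β ^ 2 / 12,
      3 * β * γ / 16 + γ ^ 2 * (Γ + α) / 8 + β ^ 3 / 18, 5 * γ ^ 2 / 32 + 5 * β ^ 2 * γ / 24,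
      7 * β * γ ^ 2 / 24, γ ^ 3 / 8]
    fun v => by simpa [Fin.sum_univ_succ, add_assoc] using hF v
  have hβ : β = 0 := by simpa using congrFun hcoeff 1
  have hγ : γ = 0 := by simpa using congrFun hcoeff 6
  refine ⟨hβ, hγ, fun v => ?_⟩
  subst hβ hγ
  linear_combination 8 * h1 v
end

section
/- Let α, β, γ, Γ ∈ ℝ, h(u) = (α+Γ)u + (β/3)u³ + (γ/4)u⁴, and let u : ℝ → ℝ be three times continuously differentiable with u(x) → 0, u'(x) → 0 and u''(x) → 0 as x → ±∞. Then the improper integral ∫_{−∞}^{∞} u(x)·[ h'(u(x))u'(x) − (u(x)+Γ)(u'(x) − u'''(x)) − 2u'(x)(u(x) − u''(x)) ] dx exists and equals 0. -/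
/-!
The integrand is an exact derivative: along any `C³` function `u`,
`u·[h'(u)u' - (u+Γ)(u' - u''') - 2u'(u - u'')]` is the derivative of
`α/2 u² + β/4 u⁴ + γ/5 u⁵ - u³ + u²u'' + Γ(u u'' - u'²/2)`.
This primitive is a continuous function of `(u, u', u'')` vanishing at the origin, so it tends
to `0` at `±∞`, and the fundamental theorem of calculus gives the improper integral `0`.
-/

open Filter Topology

theorem tendsto_intervalIntegral_neg_of_hasDerivAt {E : Type*} [NormedAddCommGroup E]
    [NormedSpace ℝ E] [CompleteSpace E] {f F : ℝ → E} {a b : E} (hF : ∀ x, HasDerivAt F (f x) x)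
    (hf : Continuous f) (hbot : Tendsto F atBot (𝓝 a)) (htop : Tendsto F atTop (𝓝 b)) :
    Tendsto (fun p : ℝ × ℝ => ∫ x in (-p.1)..p.2, f x) (atTop ×ˢ atTop) (𝓝 (b - a)) := by
  have hlim : Tendsto (fun p : ℝ × ℝ => F p.2 - F (-p.1)) (atTop ×ˢ atTop) (𝓝 (b - a)) :=
    (htop.comp tendsto_snd).sub (hbot.comp (tendsto_neg_atTop_atBot.comp tendsto_fst))
  refine hlim.congr fun p => ?_
  exact (intervalIntegral.integral_eq_sub_of_hasDerivAt (fun x _ => hF x)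
    (hf.intervalIntegrable _ _)).symm

section IterateDeriv

variable {𝕜 F : Type*} [NontriviallyNormedField 𝕜] [NormedAddCommGroup F] [NormedSpace 𝕜 F]
  {f : 𝕜 → F} {n : WithTop ℕ∞}

theorem ContDiff.hasDerivAt_iterate_deriv (hf : ContDiff 𝕜 n f) (m : ℕ)
    (hm : (m : WithTop ℕ∞) < n) (x : 𝕜) : HasDerivAt (deriv^[m] f) (deriv^[m + 1] f x) x := by
  rw [Function.iterate_succ_apply', ← iteratedDeriv_eq_iterate]
  exact (hf.differentiable_iteratedDeriv m hm x).hasDerivAt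

theorem ContDiff.continuous_iterate_deriv (hf : ContDiff 𝕜 n f) (m : ℕ)
    (hm : (m : WithTop ℕ∞) ≤ n) : Continuous (deriv^[m] f) := by
  rw [← iteratedDeriv_eq_iterate]
  exact hf.continuous_iteratedDeriv m hm

end IterateDeriv

noncomputable def h1Flux (α β γ Γ v p q : ℝ) : ℝ :=
  α / 2 * v ^ 2 + β / 4 * v ^ 4 + γ / 5 * v ^ 5 - v ^ 3 + v ^ 2 * q + Γ * (v * q - p ^ 2 / 2)

theorem hasDerivAt_h1Flux (α β γ Γ : ℝ) {u u₁ u₂ : ℝ → ℝ} {x u₃ : ℝ}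
    (hu : HasDerivAt u (u₁ x) x) (hu₁ : HasDerivAt u₁ (u₂ x) x) (hu₂ : HasDerivAt u₂ u₃ x) :
    HasDerivAt (fun y => h1Flux α β γ Γ (u y) (u₁ y) (u₂ y))
      (u x * (((α + Γ) + β * u x ^ 2 + γ * u x ^ 3) * u₁ x
        - (u x + Γ) * (u₁ x - u₃) - 2 * u₁ x * (u x - u₂ x))) x := by
  refine (((((((hu.pow 2).const_mul (α / 2)).add ((hu.pow 4).const_mul (β / 4))).add
    ((hu.pow 5).const_mul (γ / 5))).sub (hu.pow 3)).add ((hu.pow 2).mul hu₂)).add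
    (((hu.mul hu₂).sub ((hu₁.pow 2).div_const 2)).const_mul Γ)).congr_deriv ?_
  simp only [Pi.pow_apply]
  push_cast
  ring

theorem tendsto_h1Flux_zero (α β γ Γ : ℝ) {ι : Type*} {l : Filter ι}
    {v p q : ι → ℝ} (hv : Tendsto v l (𝓝 0)) (hp : Tendsto p l (𝓝 0))
    (hq : Tendsto q l (𝓝 0)) :
    Tendsto (fun i => h1Flux α β γ Γ (v i) (p i) (q i)) l (𝓝 0) := by
  have h := ((((((hv.pow 2).const_mul (α / 2)).add ((hv.pow 4).const_mul (β / 4))).add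
    ((hv.pow 5).const_mul (γ / 5))).sub (hv.pow 3)).add ((hv.pow 2).mul hq)).add
    (((hv.mul hq).sub ((hp.pow 2).div_const 2)).const_mul Γ)
  simpa [h1Flux] using h

/-- Pointwise-in-time identity underlying conservation of the `H¹`-norm: with
`h(u) = (α+Γ)u + (β/3)u³ + (γ/4)u⁴` (so `h'(v) = (α+Γ) + βv² + γv³`) and `u`
three times continuously differentiable with `u, u', u'' → 0` at `±∞`, the
improper integral
`∫_{-∞}^{∞} u·[h'(u)u' - (u+Γ)(u' - u''') - 2u'(u - u'')] dx` exists and equals `0`. -/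
theorem conservation_of_H1_integrand
    (α β γ Γ : ℝ)
    (h' : ℝ → ℝ) (hh' : ∀ v : ℝ, h' v = (α + Γ) + β * v ^ 2 + γ * v ^ 3)
    (u : ℝ → ℝ) (hu : ContDiff ℝ 3 u)
    (hu_top : Filter.Tendsto u Filter.atTop (nhds 0))
    (hu_bot : Filter.Tendsto u Filter.atBot (nhds 0))
    (hu'_top : Filter.Tendsto (deriv u) Filter.atTop (nhds 0))
    (hu'_bot : Filter.Tendsto (deriv u) Filter.atBot (nhds 0))
    (hu''_top : Filter.Tendsto (deriv (deriv u)) Filter.atTop (nhds 0))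
    (hu''_bot : Filter.Tendsto (deriv (deriv u)) Filter.atBot (nhds 0)) :
    Filter.Tendsto
      (fun ab : ℝ × ℝ => ∫ x in (-ab.1)..ab.2,
        u x * (h' (u x) * deriv u x
          - (u x + Γ) * (deriv u x - deriv (deriv (deriv u)) x)
          - 2 * deriv u x * (u x - deriv (deriv u) x)))
      (Filter.atTop ×ˢ Filter.atTop) (nhds 0) := by
  obtain rfl : h' = fun v => (α + Γ) + β * v ^ 2 + γ * v ^ 3 := funext hh'
  have hflux (x : ℝ) := hasDerivAt_h1Flux α β γ Γ (hu.hasDerivAt_iterate_deriv 0 (by norm_num) x)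
    (hu.hasDerivAt_iterate_deriv 1 (by norm_num) x) (hu.hasDerivAt_iterate_deriv 2 (by norm_num) x)
  have hcont (m : ℕ) (hm : m ≤ 3) := hu.continuous_iterate_deriv m (by exact_mod_cast hm)
  simpa using tendsto_intervalIntegral_neg_of_hasDerivAt hflux
    (by
      have := hcont 0 (by norm_num); have := hcont 1 (by norm_num)
      have := hcont 2 (by norm_num); have := hcont 3 le_rfl
      fun_prop)
    (tendsto_h1Flux_zero α β γ Γ hu_bot hu'_bot hu''_bot)
    (tendsto_h1Flux_zero α β γ Γ hu_top hu'_top hu''_top)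
end
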